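/- Let 0 < ε ≤ 1/2. If there exists a collection P of pairwise vertex-disjoint paths in U_vertex such that for at least (1/2 + ε)·2k of the 2k terminal pairs (s,t) ∈ T the collection P contains a shortest (minimum-cost) s–t path, then G contains a clique of size at least 2εk. -/

import Mathlib

/-- A directed path (self-avoiding walk) from `s` to `t` in the digraph with
edge relation `E`, given as the list of its vertices in order. -/
structure IsPathList {V : Type*} (E : V → V → Prop) (s t : V) (p : List V) : Prop where
  chain : p.Chain' E
  nodup : p.Nodup
  head : p.head? = some s
  last : p.getLast? = some t

/-- A shortest directed `s⇝t` path, where the length of a path is its number of vertices. -/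
def IsShortestDirPath {V : Type*} (E : V → V → Prop) (s t : V) (p : List V) : Prop :=
  IsPathList E s t p ∧ ∀ q : List V, IsPathList E s t q → p.length ≤ q.length

/-- Symmetrization of a relation: the adjacency of the undirected graph obtained by
forgetting the orientation of the edges. -/
def UAdj {V : Type*} (E : V → V → Prop) (x y : V) : Prop := E x y ∨ E y x

/-- The cost of a path: the sum of the costs of its vertices. -/
def pathCost {V : Type*} (cost : V → ℕ) (p : List V) : ℕ := (p.map cost).sum

/-- A shortest (minimum-cost) `s`–`t` path in the undirected graph obtained from `E`. -/
def IsShortestCostPath {V : Type*} (E : V → V → Prop) (cost : V → ℕ) (s t : V)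
    (p : List V) : Prop :=
  IsPathList (UAdj E) s t p ∧
    ∀ q : List V, IsPathList (UAdj E) s t q → pathCost cost p ≤ pathCost cost q

/-- The (directed) edges traversed by a path, as ordered pairs of consecutive vertices. -/
def dirEdges {V : Type*} (p : List V) : List (V × V) := p.zip p.tail

/-- Two directed paths are edge-disjoint. -/
def EdgeDisj {V : Type*} (p q : List V) : Prop := ∀ e ∈ dirEdges p, e ∉ dirEdges q

/-- The (undirected) edges traversed by a path, as unordered pairs. -/
def uEdges {V : Type*} (p : List V) : List (Sym2 V) := (dirEdges p).map fun e => s(e.1, e.2)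

/-- Two undirected paths are edge-disjoint. -/
def UEdgeDisj {V : Type*} (p q : List V) : Prop := ∀ e ∈ uEdges p, e ∉ uEdges q

/-- Two paths are vertex-disjoint. -/
def VertDisj {V : Type*} (p q : List V) : Prop := ∀ v ∈ p, v ∉ q

/-- `(q,ℓ) ∈ S_{i,j}`: for `i = j` this means `q = ℓ` and for `i ≠ j` it means that
`v_q v_ℓ` is an edge of `G`. -/
def Split {k N : ℕ} (G : SimpleGraph (Fin N)) (i j : Fin k) (q ℓ : Fin N) : Prop :=
  (i = j ∧ q = ℓ) ∨ (i ≠ j ∧ G.Adj q ℓ)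

instance {k N : ℕ} (G : SimpleGraph (Fin N)) [DecidableRel G.Adj]
    (i j : Fin k) (q ℓ : Fin N) : Decidable (Split G i j q ℓ) := by
  unfold Split; infer_instance

/-- The vertices of the graph `D_vertex` (also the vertex set of `U_vertex`): each grid
vertex `w_{i,j}^{q,ℓ}` of `D_int` gives rise to `gridH i j q ℓ` (the vertex `w_Hor`) and
`gridV i j q ℓ` (the vertex `w_Ver`, which carries edges only when `w` is vertex-split;
when `w` is not split the single vertex `w_Hor = w_Ver` is represented by `gridH` and
`gridV` is isolated), plus the terminal vertices. -/
inductive DVertV (k N : ℕ) where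
  | gridH (i j : Fin k) (q ℓ : Fin N)
  | gridV (i j : Fin k) (q ℓ : Fin N)
  | a (i : Fin k)
  | b (i : Fin k)
  | c (j : Fin k)
  | d (j : Fin k)
  deriving DecidableEq

/-- The vertex of `D_vertex` carrying the vertical (south/north) edges at the former
grid vertex `w_{i,j}^{q,ℓ}`: `w_Ver` if it is vertex-split, and `w_Hor = w_Ver`
otherwise. -/
def vNode {k N : ℕ} (G : SimpleGraph (Fin N)) [DecidableRel G.Adj]
    (i j : Fin k) (q ℓ : Fin N) : DVertV k N :=
  if Split G i j q ℓ then DVertV.gridV i j q ℓ else DVertV.gridH i j q ℓ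

/-- The directed edges of `D_vertex`: horizontal (west/east) edges attach to `w_Hor`
and vertical (south/north) edges attach to `w_Ver` (with `w_Hor = w_Ver` at non-split
vertices); terminal edges play the role of the corresponding boundary edges. -/
inductive DVertE (k N : ℕ) (G : SimpleGraph (Fin N)) [DecidableRel G.Adj] :
    DVertV k N → DVertV k N → Prop where
  /-- former edge `w_{i,j}^{q,ℓ} → w_{i,j}^{q,ℓ+1}` (vertical) -/
  | up (i j : Fin k) (q ℓ ℓ' : Fin N) (h : (ℓ' : ℕ) = (ℓ : ℕ) + 1) :
      DVertE k N G (vNode G i j q ℓ) (vNode G i j q ℓ')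
  /-- former edge `w_{i,j}^{q,ℓ} → w_{i,j}^{q+1,ℓ}` (horizontal) -/
  | right (i j : Fin k) (q q' ℓ : Fin N) (h : (q' : ℕ) = (q : ℕ) + 1) :
      DVertE k N G (.gridH i j q ℓ) (.gridH i j q' ℓ)
  /-- former edge `w_{i,j}^{N,ℓ} → w_{i+1,j}^{1,ℓ}` (horizontal) -/
  | hmatch (i i' j : Fin k) (q q' ℓ : Fin N)
      (hi : (i' : ℕ) = (i : ℕ) + 1) (hq : (q : ℕ) + 1 = N) (hq' : (q' : ℕ) = 0) :
      DVertE k N G (.gridH i j q ℓ) (.gridH i' j q' ℓ)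
  /-- former edge `w_{i,j}^{ℓ,N} → w_{i,j+1}^{ℓ,1}` (vertical) -/
  | vmatch (i j j' : Fin k) (q ℓ ℓ' : Fin N)
      (hj : (j' : ℕ) = (j : ℕ) + 1) (hl : (ℓ : ℕ) + 1 = N) (hl' : (ℓ' : ℕ) = 0) :
      DVertE k N G (vNode G i j q ℓ) (vNode G i j' q ℓ')
  /-- former edge `a_i → w_{i,1}^{q,1}` (vertical: `a_i` plays the south neighbour) -/
  | srcA (i j : Fin k) (q ℓ : Fin N) (hj : (j : ℕ) = 0) (hl : (ℓ : ℕ) = 0) :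
      DVertE k N G (.a i) (vNode G i j q ℓ)
  /-- former edge `w_{i,k}^{q,N} → b_i` (vertical) -/
  | snkB (i j : Fin k) (q ℓ : Fin N) (hj : (j : ℕ) + 1 = k) (hl : (ℓ : ℕ) + 1 = N) :
      DVertE k N G (vNode G i j q ℓ) (.b i)
  /-- former edge `c_j → w_{1,j}^{1,ℓ}` (horizontal: `c_j` plays the west neighbour) -/
  | srcC (i j : Fin k) (q ℓ : Fin N) (hi : (i : ℕ) = 0) (hq : (q : ℕ) = 0) :
      DVertE k N G (.c j) (.gridH i j q ℓ)
  /-- former edge `w_{k,j}^{N,ℓ} → d_j` (horizontal) -/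
  | snkD (i j : Fin k) (q ℓ : Fin N) (hi : (i : ℕ) + 1 = k) (hq : (q : ℕ) + 1 = N) :
      DVertE k N G (.gridH i j q ℓ) (.d j)

/-- `Canonical_vertex(r; c_j⇝d_j)`: obtained from `Canonical(r; c_j⇝d_j)` by routing
through `w_Hor` at every vertex-split grid vertex (and through `w_Hor = w_Ver` at
not-split vertices). -/
def canonVertH (k N : ℕ) (j : Fin k) (r : Fin N) : List (DVertV k N) :=
  DVertV.c j ::
    (((List.finRange k).flatMap fun i =>
        (List.finRange N).map fun q => DVertV.gridH i j q r) ++ [DVertV.d j])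

/-- `Canonical_vertex(r; a_i⇝b_i)`: obtained from `Canonical(r; a_i⇝b_i)` by routing
through `w_Ver` at every vertex-split grid vertex (and through `w_Hor = w_Ver` at
not-split vertices). -/
def canonVertV {k N : ℕ} (G : SimpleGraph (Fin N)) [DecidableRel G.Adj]
    (i : Fin k) (r : Fin N) : List (DVertV k N) :=
  DVertV.a i ::
    (((List.finRange k).flatMap fun j =>
        (List.finRange N).map fun ℓ => vNode G i j r ℓ) ++ [DVertV.b i])
/-- The vertex costs in `U_vertex`: each (black) vertex arising from the splitting of a
grid vertex has cost `1`, and each terminal (green) vertex has cost `2kN`. -/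
def costVert (k N : ℕ) : DVertV k N → ℕ
  | .gridH _ _ _ _ => 1
  | .gridV _ _ _ _ => 1
  | _ => 2 * k * N
/-- The source of the `x`-th terminal pair of `T`: `a_i` for `x = inl i`
(pair `(a_i, b_i)`), and `c_j` for `x = inr j` (pair `(c_j, d_j)`). -/
def vSrc {k N : ℕ} (x : Fin k ⊕ Fin k) : DVertV k N :=
  match x with
  | .inl i => DVertV.a i
  | .inr j => DVertV.c j

/-- The sink of the `x`-th terminal pair of `T`. -/
def vDst {k N : ℕ} (x : Fin k ⊕ Fin k) : DVertV k N :=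
  match x with
  | .inl i => DVertV.b i
  | .inr j => DVertV.d j

/-!
Comparing with the canonical `a_i ⇝ b_i` path, of cost `5kN`, shows that a shortest
`a_i ⇝ b_i` path has no terminal besides its ends and at most `kN` grid vertices. The level
`(j - 1)N + (ℓ - 1)` of a grid vertex `w_{i,j}^{q,ℓ}` rises by at most one along an edge, and by exactly one
only along a vertical edge, which keeps `i` and `q`. The path has to climb from level `0` to
level `kN - 1`, so it climbs at every step: it runs through `w_{i,j}^{r,ℓ}` for all `j, ℓ` and a
single row `r = r_i`. Transposing the grid gives the same for `c_j ⇝ d_j` with a column `c_j`.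
If the pairs `(a_i, b_i)` and `(c_j, d_j)` are both served, the two paths meet in
`w_{i,j}^{r_i, c_j}` unless that vertex is split, i.e. unless `(r_i, c_j) ∈ S_{i,j}`. Hence
`r_i = c_i`, and `v_{r_i} v_{r_j}` is an edge for `i ≠ j`, over the at least `2εk` indices `i`
for which both pairs are served.
-/

namespace List

variable {α : Type*} {R : α → α → Prop} {f : α → ℕ}

theorem IsChain.succ_le_add_length (hR : ∀ a b, R a b → f b ≤ f a + 1) :
    ∀ {l : List α} {x y : α}, l.IsChain R → l.head? = some x → l.getLast? = some y →
      f y + 1 ≤ f x + l.length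
  | [], _, _, _, hx, _ => by simp at hx
  | [_], _, _, _, hx, hy => by simp_all
  | a :: b :: l, x, y, hl, hx, hy => by
    obtain ⟨hab, hl⟩ := isChain_cons_cons.mp hl
    have hdrift := hl.succ_le_add_length hR rfl (by simpa using hy)
    cases Option.some.inj hx
    have := hR _ _ hab
    simp only [length_cons] at hdrift ⊢
    omega

theorem IsChain.exists_mem_of_add_length_le {P : α → Prop}
    (hR : ∀ a b, R a b → f b ≤ f a + 1) (hP : ∀ a b, R a b → f b = f a + 1 → P a → P b) :
    ∀ {l : List α} {x y : α}, l.IsChain R → l.head? = some x → l.getLast? = some y → P x →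
      f x + l.length ≤ f y + 1 → ∀ m, f x ≤ m → m ≤ f y → ∃ v ∈ l, P v ∧ f v = m
  | [], _, _, _, hx, _, _, _, _, _, _ => by simp at hx
  | [_], _, _, _, hx, hy, hPx, _, m, h₁, h₂ => by
    simp_all only [head?_cons, getLast?_singleton, Option.some.injEq]
    exact ⟨_, mem_singleton_self _, hPx, by omega⟩
  | a :: b :: l, x, y, hl, hx, hy, hPx, htight, m, h₁, h₂ => by
    obtain ⟨hab, hl⟩ := isChain_cons_cons.mp hl
    cases Option.some.inj hx
    have hy' : (b :: l).getLast? = some y := by simpa using hy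
    have hdrift := hl.succ_le_add_length hR rfl hy'
    have hstep := hR _ _ hab
    simp only [length_cons] at hdrift htight
    have hb : f b = f a + 1 := by omega
    rcases h₁.eq_or_lt with rfl | hm
    · exact ⟨a, mem_cons_self, hPx, rfl⟩
    · obtain ⟨v, hv, hPv, rfl⟩ := hl.exists_mem_of_add_length_le hR hP rfl hy'
        (hP _ _ hab hb hPx) (by simp only [length_cons]; omega) m (by omega) h₂
      exact ⟨v, mem_cons_of_mem _ hv, hPv, rfl⟩

theorem exists_eq_cons_append {l : List α} {s t : α} (hs : l.head? = some s)
    (ht : l.getLast? = some t) (hst : s ≠ t) : ∃ g, l = s :: (g ++ [t]) := by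
  obtain ⟨l, rfl⟩ := head?_eq_some_iff.mp hs
  rcases l.eq_nil_or_concat with rfl | ⟨g, t', rfl⟩
  · simp_all
  · rw [concat_eq_append, ← cons_append, getLast?_concat] at ht
    exact ⟨g, by simp_all⟩

end List

theorem Finset.card_le_card_toLeft_inter_toRight_add {α : Type*} [Fintype α] [DecidableEq α]
    (u : Finset (α ⊕ α)) : u.card ≤ (u.toLeft ∩ u.toRight).card + Fintype.card α := by
  have := card_toLeft_add_card_toRight (u := u)
  have := card_inter_add_card_union u.toLeft u.toRight
  have := card_le_univ (u.toLeft ∪ u.toRight)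
  omega

section Paths

variable {V W : Type*} {E : V → V → Prop} {F : W → W → Prop}

theorem UAdj.map {f : V → W} (hf : ∀ x y, E x y → F (f x) (f y)) {x y : V} (h : UAdj E x y) :
    UAdj F (f x) (f y) :=
  h.imp (hf x y) (hf y x)

theorem IsPathList.map {f : V → W} (hf : f.Injective) (hE : ∀ x y, E x y → F (f x) (f y))
    {s t : V} {p : List V} (hp : IsPathList E s t p) : IsPathList F (f s) (f t) (p.map f) where
  chain := List.isChain_map_of_isChain f hE hp.chain
  nodup := hp.nodup.map hf
  head := by simp [hp.head]
  last := by simp [hp.last]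

theorem pathCost_map (c : W → ℕ) (f : V → W) (p : List V) :
    pathCost c (p.map f) = pathCost (c ∘ f) p := by
  simp [pathCost]

theorem pathCost_cons_append (c : V → ℕ) (s t : V) (g : List V) :
    pathCost c (s :: (g ++ [t])) = c s + pathCost c g + c t := by
  simp [pathCost, add_assoc]

theorem IsShortestCostPath.map_relIso (σ : E ≃r F) {c : V → ℕ} {c' : W → ℕ}
    (hc : ∀ v, c' (σ v) = c v) {s t : V} {p : List V} (hp : IsShortestCostPath E c s t p) :
    IsShortestCostPath F c' (σ s) (σ t) (p.map σ) := by
  have hc' : c ∘ σ.symm = c' := funext fun w => by simp [← hc (σ.symm w)]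
  refine ⟨hp.1.map σ.injective fun _ _ => UAdj.map fun _ _ h => σ.map_rel_iff.mpr h,
    fun q hq => ?_⟩
  have hq' := hq.map σ.symm.injective fun _ _ => UAdj.map fun _ _ h => σ.symm.map_rel_iff.mpr h
  simp only [RelIso.symm_apply_apply] at hq'
  calc pathCost c' (p.map σ) = pathCost c p := by rw [pathCost_map]; congr; exact funext hc
    _ ≤ pathCost c (q.map σ.symm) := hp.2 _ hq'
    _ = pathCost c' q := by rw [pathCost_map, hc']

end Paths

theorem Split.comm {k N : ℕ} {G : SimpleGraph (Fin N)} {i j : Fin k} {q ℓ : Fin N} :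
    Split G i j q ℓ ↔ Split G j i ℓ q := by
  unfold Split
  constructor <;> rintro (⟨rfl, rfl⟩ | ⟨hij, hadj⟩) <;> simp_all [eq_comm, G.adj_comm]

theorem isNClique_image_of_split {k N : ℕ} {G : SimpleGraph (Fin N)} {K : Finset (Fin k)}
    {r c : Fin k → Fin N} (h : ∀ i ∈ K, ∀ j ∈ K, Split G i j (r i) (c j)) :
    G.IsNClique K.card (K.image r) := by
  have hdiag : ∀ i ∈ K, r i = c i := fun i hi => by
    rcases h i hi i hi with ⟨-, h⟩ | ⟨h, -⟩
    · exact h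
    · exact absurd rfl h
  have hadj : ∀ i ∈ K, ∀ j ∈ K, i ≠ j → G.Adj (r i) (r j) := fun i hi j hj hij => by
    rcases h i hi j hj with ⟨h, -⟩ | ⟨-, h⟩
    · exact absurd h hij
    · rwa [hdiag j hj]
  have hinj : Set.InjOn r K := fun i hi j hj hij => by
    by_contra hne
    exact G.loopless.irrefl _ (hij ▸ hadj i hi j hj hne)
  refine ⟨?_, Finset.card_image_of_injOn hinj⟩
  simp only [Finset.coe_image]
  rintro _ ⟨i, hi, rfl⟩ _ ⟨j, hj, rfl⟩ hne
  exact hadj i hi j hj fun h => hne (h ▸ rfl)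

section Grid

variable {k N : ℕ} {G : SimpleGraph (Fin N)} [DecidableRel G.Adj]

namespace DVertV

def IsGrid : DVertV k N → Prop
  | .gridH .. | .gridV .. => True
  | _ => False

/-- The level `(j - 1) N + (ℓ - 1)` of `w_{i,j}^{q,ℓ}` (indices here start at `0`). -/
def level : DVertV k N → ℕ
  | .gridH _ j _ ℓ | .gridV _ j _ ℓ => finProdFinEquiv (j, ℓ)
  | _ => 0

theorem isGrid_vNode (i j : Fin k) (q ℓ : Fin N) : IsGrid (vNode G i j q ℓ) := by
  unfold vNode; split <;> trivial

@[simp]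
theorem level_vNode (i j : Fin k) (q ℓ : Fin N) :
    level (vNode G i j q ℓ) = finProdFinEquiv (j, ℓ) := by
  unfold vNode; split <;> rfl

theorem vNode_inj {i i' j j' : Fin k} {q q' ℓ ℓ' : Fin N} :
    vNode G i j q ℓ = vNode G i' j' q' ℓ' ↔ i = i' ∧ j = j' ∧ q = q' ∧ ℓ = ℓ' := by
  refine ⟨fun h => ?_, by rintro ⟨rfl, rfl, rfl, rfl⟩; rfl⟩
  unfold vNode at h; split at h <;> split at h <;> simp_all

theorem vNode_eq_gridH_iff {i j : Fin k} {q ℓ : Fin N} :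
    vNode G i j q ℓ = gridH i j q ℓ ↔ ¬ Split G i j q ℓ := by
  unfold vNode; split <;> simp_all

theorem costVert_of_isGrid {v : DVertV k N} (hv : IsGrid v) : costVert k N v = 1 := by
  cases v <;> first | rfl | exact hv.elim

theorem costVert_of_not_isGrid {v : DVertV k N} (hv : ¬ IsGrid v) :
    costVert k N v = 2 * k * N := by
  cases v <;> first | rfl | exact (hv trivial).elim

end DVertV

open DVertV

theorem pathCost_of_isGrid {g : List (DVertV k N)} (hg : ∀ v ∈ g, IsGrid v) :
    pathCost (costVert k N) g = g.length := by
  rw [pathCost, List.map_congr_left fun v hv => costVert_of_isGrid (hg v hv)]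
  simp

theorem isGrid_of_pathCost_le {g : List (DVertV k N)} (hkN : 0 < k * N)
    (hg : pathCost (costVert k N) g ≤ k * N) : (∀ v ∈ g, IsGrid v) ∧ g.length ≤ k * N := by
  have hgrid : ∀ v ∈ g, IsGrid v := fun v hv => by
    by_contra hv'
    have := List.le_sum_of_mem (List.mem_map_of_mem (f := costVert k N) hv)
    rw [costVert_of_not_isGrid hv'] at this
    unfold pathCost at hg
    nlinarith
  exact ⟨hgrid, pathCost_of_isGrid hgrid ▸ hg⟩

theorem DVertE.level_eq_or_succ {x y : DVertV k N} (h : DVertE k N G x y)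
    (hx : IsGrid x) (hy : IsGrid y) :
    level y = level x ∨ level y = level x + 1 ∧
      ∃ i j q ℓ j' ℓ', x = vNode G i j q ℓ ∧ y = vNode G i j' q ℓ' := by
  cases h with
  | up i j q ℓ ℓ' h =>
    refine .inr ⟨?_, i, j, q, ℓ, j, ℓ', rfl, rfl⟩
    simp only [level_vNode, finProdFinEquiv_apply_val, h]
    omega
  | vmatch i j j' q ℓ ℓ' hj hl hl' =>
    refine .inr ⟨?_, i, j, q, ℓ, j', ℓ', rfl, rfl⟩
    simp only [level_vNode, finProdFinEquiv_apply_val, hj, hl', mul_add]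
    omega
  | right | hmatch => exact .inl rfl
  | _ => contradiction

theorem UAdj.level_le {x y : DVertV k N} (h : UAdj (DVertE k N G) x y)
    (hx : IsGrid x) (hy : IsGrid y) : level y ≤ level x + 1 := by
  rcases h with h | h
  · rcases h.level_eq_or_succ hx hy with h | ⟨h, -⟩ <;> omega
  · rcases h.level_eq_or_succ hy hx with h | ⟨h, -⟩ <;> omega

theorem UAdj.exists_vNode_of_level_eq_succ {i : Fin k} {q : Fin N} {x y : DVertV k N}
    (h : UAdj (DVertE k N G) x y) (hx : IsGrid x) (hy : IsGrid y) (hxy : level y = level x + 1)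
    (hxq : ∃ j ℓ, x = vNode G i j q ℓ) : ∃ j ℓ, y = vNode G i j q ℓ := by
  rcases h with h | h
  · rcases h.level_eq_or_succ hx hy with h | ⟨-, i', j, q', ℓ, j', ℓ', rfl, rfl⟩
    · omega
    · obtain ⟨_, _, hxq⟩ := hxq
      obtain ⟨rfl, -, rfl, -⟩ := vNode_inj.mp hxq
      exact ⟨j', ℓ', rfl⟩
  · rcases h.level_eq_or_succ hy hx with h | ⟨h, -⟩ <;> omega

theorem UAdj.exists_vNode_of_a {i : Fin k} {w : DVertV k N}
    (h : UAdj (DVertE k N G) (.a i) w) : ∃ j q ℓ, w = vNode G i j q ℓ ∧ level w = 0 := by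
  rcases h with h | h <;> generalize hx : DVertV.a i = x at h <;> cases h
  case inl.srcA j q ℓ hj hl =>
    cases hx
    exact ⟨j, q, ℓ, rfl, by simp [hj, hl]⟩
  all_goals simp [vNode, eq_ite_iff] at hx

theorem UAdj.exists_vNode_of_b {i : Fin k} {w : DVertV k N}
    (h : UAdj (DVertE k N G) w (.b i)) :
    ∃ j q ℓ, w = vNode G i j q ℓ ∧ level w + 1 = k * N := by
  rcases h with h | h <;> generalize hx : DVertV.b i = x at h <;> cases h
  case inl.snkB j q ℓ hj hl =>
    cases hx
    refine ⟨j, q, ℓ, rfl, ?_⟩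
    have h : ((j : ℕ) + 1) * N = k * N := by rw [hj]
    simp only [level_vNode, finProdFinEquiv_apply_val]
    linarith
  all_goals simp [vNode, eq_ite_iff] at hx

theorem DVertE.a_vNode_of_level_eq_zero {i j : Fin k} {q ℓ : Fin N}
    (h : level (vNode G i j q ℓ) = 0) :
    DVertE k N G (.a i) (vNode G i j q ℓ) := by
  simp only [level_vNode, finProdFinEquiv_apply_val] at h
  exact .srcA i j q ℓ ((Nat.mul_eq_zero.mp (by omega)).resolve_left ℓ.pos.ne') (by omega)

theorem DVertE.vNode_b_of_level_add_one_eq {i j : Fin k} {q ℓ : Fin N}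
    (h : level (vNode G i j q ℓ) + 1 = k * N) :
    DVertE k N G (vNode G i j q ℓ) (.b i) := by
  simp only [level_vNode, finProdFinEquiv_apply_val] at h
  have hj : (j : ℕ) + 1 = k := by
    by_contra hj
    have : N * (j + 2) ≤ N * k := Nat.mul_le_mul_left N (by omega)
    linarith [ℓ.isLt]
  have : ((j : ℕ) + 1) * N = k * N := by rw [hj]
  exact .snkB i j q ℓ hj (by linarith)

theorem DVertE.vNode_of_level_eq_succ {i j j' : Fin k} {q ℓ ℓ' : Fin N}
    (h : level (vNode G i j' q ℓ') = level (vNode G i j q ℓ) + 1) :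
    DVertE k N G (vNode G i j q ℓ) (vNode G i j' q ℓ') := by
  simp only [level_vNode, finProdFinEquiv_apply_val] at h
  by_cases hℓ : (ℓ : ℕ) + 1 < N
  · have he : finProdFinEquiv (j', ℓ') = finProdFinEquiv (j, ⟨ℓ + 1, hℓ⟩) :=
      Fin.ext (by simp only [finProdFinEquiv_apply_val]; omega)
    obtain ⟨rfl, rfl⟩ := Prod.mk.inj (finProdFinEquiv.injective he)
    exact .up i j' q ℓ _ rfl
  · have hj : (j : ℕ) + 1 < k := by
      by_contra hj
      have : N * j' ≤ N * j := Nat.mul_le_mul_left N (by omega)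
      omega
    have he : finProdFinEquiv (j', ℓ') = finProdFinEquiv (⟨j + 1, hj⟩, ⟨0, ℓ.pos⟩) :=
      Fin.ext (by simp only [finProdFinEquiv_apply_val]; rw [mul_add]; omega)
    obtain ⟨rfl, rfl⟩ := Prod.mk.inj (finProdFinEquiv.injective he)
    exact .vmatch i j _ q ℓ _ rfl (by omega) rfl

theorem canonVertV_eq_ofFn (i : Fin k) (r : Fin N) :
    canonVertV G i r = .a i :: (List.ofFn (fun t : Fin (k * N) =>
      vNode G i (finProdFinEquiv.symm t).1 r (finProdFinEquiv.symm t).2) ++ [.b i]) := by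
  rw [canonVertV, List.ofFn_mul]
  simp only [List.flatMap_def, ← List.ofFn_eq_map]
  congr 4
  ext j : 1
  congr 1
  ext ℓ : 1
  rw [finProdFinEquiv_symm_apply]
  congr 1 <;> ext <;> simp [Fin.coe_divNat, Fin.coe_modNat, add_comm _ (ℓ : ℕ),
    Nat.add_mul_div_right _ _ ℓ.pos, Nat.div_eq_of_lt ℓ.isLt, Nat.mod_eq_of_lt ℓ.isLt]

theorem isPathList_canonVertV (i : Fin k) (r : Fin N) :
    IsPathList (UAdj (DVertE k N G)) (.a i) (.b i) (canonVertV G i r) := by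
  rw [canonVertV_eq_ofFn]
  set f : Fin (k * N) → DVertV k N :=
    fun t => vNode G i (finProdFinEquiv.symm t).1 r (finProdFinEquiv.symm t).2
  have hf : ∀ t, level (f t) = t := fun t => by simp [f, Nat.mod_add_div]
  have hkN : 0 < k * N := Nat.mul_pos i.pos r.pos
  have hhead : (List.ofFn f).head? = some (f ⟨0, hkN⟩) := by simp [List.head?_eq_getElem?, hkN]
  have hlast : (List.ofFn f).getLast? = some (f ⟨k * N - 1, by omega⟩) := by
    simp [List.getLast?_eq_getElem?, hkN]
  refine ⟨?_, ?_, rfl, by rw [← List.cons_append, List.getLast?_concat]⟩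
  · refine List.IsChain.cons (List.IsChain.append ?_ (List.isChain_singleton _) ?_) ?_
    · rw [List.isChain_ofFn]
      exact fun t ht => .inl (DVertE.vNode_of_level_eq_succ (by rw [hf, hf]))
    · simp only [hlast, List.head?_cons, Option.mem_def, Option.some.injEq]
      rintro _ rfl _ rfl
      exact .inl (DVertE.vNode_b_of_level_add_one_eq (by rw [hf, Fin.val_mk]; omega))
    · simp only [List.head?_append, hhead, Option.some_or, Option.mem_def, Option.some.injEq]
      rintro _ rfl
      exact .inl (DVertE.a_vNode_of_level_eq_zero (hf _))
  · have hfinj : f.Injective := fun t t' h => Fin.ext (by rw [← hf t, ← hf t', h])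
    have hfgrid : ∀ v ∈ List.ofFn f, IsGrid v := by
      simp only [List.mem_ofFn]
      rintro _ ⟨t, rfl⟩
      exact isGrid_vNode ..
    simp only [List.nodup_cons, List.nodup_append, List.nodup_ofFn, List.mem_append]
    refine ⟨?_, hfinj, by simp, ?_⟩
    · rintro (h | h)
      · exact hfgrid _ h
      · simp at h
    · intro x hx y hy hxy
      rw [List.mem_singleton] at hy
      subst hy hxy
      exact hfgrid _ hx

theorem pathCost_canonVertV (i : Fin k) (r : Fin N) :
    pathCost (costVert k N) (canonVertV G i r) = 2 * k * N + k * N + 2 * k * N := by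
  rw [canonVertV_eq_ofFn, pathCost_cons_append, pathCost_of_isGrid (by simp [isGrid_vNode])]
  simp [costVert]

theorem exists_forall_vNode_mem_of_isChain {i : Fin k} {g : List (DVertV k N)}
    (hchain : (DVertV.a i :: (g ++ [.b i])).IsChain (UAdj (DVertE k N G)))
    (hgrid : ∀ v ∈ g, IsGrid v) (hlen : g.length ≤ k * N) :
    ∃ r, ∀ j ℓ, vNode G i j r ℓ ∈ g := by
  obtain ⟨w, g', rfl⟩ : ∃ w g', g = w :: g' := by
    refine List.exists_cons_of_ne_nil fun hg => ?_
    subst hg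
    obtain ⟨j, q, ℓ, h, -⟩ := (hchain.rel_head? rfl).exists_vNode_of_a
    have := isGrid_vNode (G := G) i j q ℓ
    rw [← h] at this
    exact this
  obtain ⟨j₀, r, ℓ₀, rfl, hw⟩ := (hchain.rel_head? rfl).exists_vNode_of_a
  obtain ⟨w', hw'⟩ : ∃ w', (vNode G i j₀ r ℓ₀ :: g').getLast? = some w' :=
    ⟨_, List.getLast?_eq_some_getLast (List.cons_ne_nil _ _)⟩
  have hw'b : UAdj (DVertE k N G) w' (.b i) := by
    rw [← List.cons_append] at hchain
    exact (List.isChain_append.mp hchain).2.2 w' (by simp [hw']) _ rfl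
  obtain ⟨-, -, -, -, hlast⟩ := hw'b.exists_vNode_of_b
  have hg : (vNode G i j₀ r ℓ₀ :: g').IsChain
      (fun x y => UAdj (DVertE k N G) x y ∧ IsGrid x ∧ IsGrid y) :=
    (hchain.infix ⟨[.a i], [.b i], rfl⟩).imp_of_mem_imp
      fun x y hx hy h => ⟨h, hgrid x hx, hgrid y hy⟩
  have key := hg.exists_mem_of_add_length_le (P := fun v => ∃ j ℓ, v = vNode G i j r ℓ)
    (fun x y h => h.1.level_le h.2.1 h.2.2)
    (fun x y h => h.1.exists_vNode_of_level_eq_succ h.2.1 h.2.2) rfl hw' ⟨j₀, ℓ₀, rfl⟩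
    (by omega)
  refine ⟨r, fun j ℓ => ?_⟩
  have hlt := (finProdFinEquiv (j, ℓ)).isLt
  obtain ⟨v, hv, ⟨j', ℓ', rfl⟩, hlev⟩ := key (level (vNode G i j r ℓ)) (by omega)
    (by simp only [level_vNode]; omega)
  simp only [level_vNode] at hlev
  obtain ⟨rfl, rfl⟩ := Prod.mk.inj (finProdFinEquiv.injective (Fin.ext hlev))
  exact hv

theorem IsShortestCostPath.exists_canonVertV_subset {i : Fin k} {p : List (DVertV k N)}
    (hp : IsShortestCostPath (DVertE k N G) (costVert k N) (.a i) (.b i) p) :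
    ∃ r, canonVertV G i r ⊆ p := by
  obtain ⟨hpath, hmin⟩ := hp
  obtain ⟨g, rfl⟩ := List.exists_eq_cons_append hpath.head hpath.last (by simp)
  have hchain : (DVertV.a i :: (g ++ [.b i])).IsChain (UAdj (DVertE k N G)) := hpath.chain
  obtain ⟨-, r₀, -, -, -⟩ :=
    (hchain.rel_head? (List.head?_eq_some_head (by simp))).exists_vNode_of_a
  have hcost := hmin _ (isPathList_canonVertV i r₀)
  rw [pathCost_cons_append, pathCost_canonVertV] at hcost
  obtain ⟨hgrid, hlen⟩ := isGrid_of_pathCost_le (g := g) (Nat.mul_pos i.pos r₀.pos)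
    (by simp only [costVert] at hcost; linarith)
  obtain ⟨r, hr⟩ := exists_forall_vNode_mem_of_isChain hchain hgrid hlen
  refine ⟨r, fun v hv => ?_⟩
  simp only [canonVertV, List.mem_cons, List.mem_append, List.mem_flatMap, List.mem_finRange,
    List.mem_map, true_and, List.not_mem_nil, or_false] at hv
  rcases hv with rfl | ⟨j, ℓ, rfl⟩ | rfl <;> simp [hr]

namespace DVertV

/-- The transposition `w_{i,j}^{q,ℓ} ↦ w_{j,i}^{ℓ,q}` of the grid, which exchanges `w_Hor` with
`w_Ver` and the terminals `a, b` with `c, d`. -/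
def transpose (G : SimpleGraph (Fin N)) [DecidableRel G.Adj] : DVertV k N → DVertV k N
  | .gridH i j q ℓ => vNode G j i ℓ q
  | .gridV i j q ℓ => if Split G i j q ℓ then .gridH j i ℓ q else .gridV j i ℓ q
  | .a i => .c i
  | .b i => .d i
  | .c j => .a j
  | .d j => .b j

@[simp]
theorem transpose_vNode (i j : Fin k) (q ℓ : Fin N) :
    transpose G (vNode G i j q ℓ) = gridH j i ℓ q := by
  unfold vNode; split <;> simp_all [transpose, vNode, Split.comm]

theorem transpose_involutive : Function.Involutive (transpose (k := k) G) := by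
  rintro (⟨i, j, q, ℓ⟩ | ⟨i, j, q, ℓ⟩ | _ | _ | _ | _)
  · exact transpose_vNode j i ℓ q
  · by_cases h : Split G i j q ℓ <;> simp [transpose, vNode, h, Split.comm]
  all_goals rfl

theorem costVert_transpose (v : DVertV k N) :
    costVert k N (transpose G v) = costVert k N v := by
  cases v with
  | gridH i j q ℓ => exact costVert_of_isGrid (isGrid_vNode j i ℓ q)
  | gridV => simp only [transpose]; split <;> rfl
  | _ => rfl

theorem map_transpose_canonVertV (j : Fin k) (c : Fin N) :
    (canonVertV G j c).map (transpose G) = canonVertH k N j c := by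
  simp only [canonVertV, canonVertH, List.map_cons, List.map_append, List.map_flatMap,
    List.map_map, Function.comp_def, transpose_vNode]
  rfl

end DVertV

theorem DVertE.transpose {x y : DVertV k N} (h : DVertE k N G x y) :
    DVertE k N G (transpose G x) (transpose G y) := by
  cases h with
  | up i j q ℓ ℓ' h => simpa using DVertE.right j i ℓ ℓ' q h
  | right i j q q' ℓ h => exact .up j i ℓ q q' h
  | hmatch i i' j q q' ℓ hi hq hq' => exact .vmatch j i i' ℓ q q' hi hq hq'
  | vmatch i j j' q ℓ ℓ' hj hl hl' => simpa using DVertE.hmatch j j' i ℓ ℓ' q hj hl hl'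
  | srcA i j q ℓ hj hl => rw [transpose_vNode]; exact .srcC j i ℓ q hj hl
  | snkB i j q ℓ hj hl => rw [transpose_vNode]; exact .snkD j i ℓ q hj hl
  | srcC i j q ℓ hi hq => exact .srcA j i ℓ q hi hq
  | snkD i j q ℓ hi hq => exact .snkB j i ℓ q hi hq

def DVertE.transposeIso (G : SimpleGraph (Fin N)) [DecidableRel G.Adj] :
    DVertE k N G ≃r DVertE k N G where
  toEquiv := (transpose_involutive (G := G)).toPerm
  map_rel_iff' := ⟨fun h => by simpa [transpose_involutive _] using h.transpose,
    DVertE.transpose⟩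

@[simp]
theorem DVertE.coe_transposeIso : ⇑(DVertE.transposeIso (k := k) G) = DVertV.transpose G :=
  rfl

theorem IsShortestCostPath.exists_canonVertH_subset {j : Fin k} {p : List (DVertV k N)}
    (hp : IsShortestCostPath (DVertE k N G) (costVert k N) (.c j) (.d j) p) :
    ∃ c, canonVertH k N j c ⊆ p := by
  obtain ⟨c, hc⟩ :=
    (hp.map_relIso (DVertE.transposeIso G) costVert_transpose).exists_canonVertV_subset
  refine ⟨c, ?_⟩
  rw [← map_transpose_canonVertV (G := G)]
  intro v hv
  obtain ⟨u, hu, rfl⟩ := List.mem_map.mp hv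
  obtain ⟨x, hx, rfl⟩ := List.mem_map.mp (hc hu)
  rwa [DVertE.coe_transposeIso, transpose_involutive]

theorem split_of_vertDisj {i j : Fin k} {r c : Fin N} {p p' : List (DVertV k N)}
    (hd : VertDisj p p') (hp : canonVertV G i r ⊆ p) (hp' : canonVertH k N j c ⊆ p') :
    Split G i j r c := by
  by_contra hs
  have h₁ : vNode G i j r c ∈ p := hp (by simp [canonVertV])
  have h₂ : gridH i j r c ∈ p' := hp' (by simp [canonVertH])
  exact hd _ h₁ (vNode_eq_gridH_iff.mpr hs ▸ h₂)

end Grid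

theorem UVert_soundness_general (N k : ℕ) (hN : 1 ≤ N)
    (G : SimpleGraph (Fin N)) [DecidableRel G.Adj]
    (ε : ℝ)
    (SAT : Finset (Fin k ⊕ Fin k)) (P : Fin k ⊕ Fin k → List (DVertV k N))
    (hcard : (1 / 2 + ε) * (2 * k) ≤ (SAT.card : ℝ))
    (hshort : ∀ x ∈ SAT,
      IsShortestCostPath (DVertE k N G) (costVert k N) (vSrc x) (vDst x) (P x))
    (hdisj : ∀ x ∈ SAT, ∀ y ∈ SAT, x ≠ y → VertDisj (P x) (P y)) :
    ∃ Z : Finset (Fin N),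
      2 * ε * k ≤ (Z.card : ℝ) ∧ ∀ u ∈ Z, ∀ v ∈ Z, u ≠ v → G.Adj u v := by
  have : Nonempty (Fin N) := ⟨⟨0, hN⟩⟩
  choose! r hr using fun i (hi : .inl i ∈ SAT) => (hshort _ hi).exists_canonVertV_subset
  choose! c hc using fun j (hj : .inr j ∈ SAT) => (hshort _ hj).exists_canonVertH_subset
  set K := SAT.toLeft ∩ SAT.toRight
  have hK : ∀ i ∈ K, .inl i ∈ SAT ∧ .inr i ∈ SAT := fun i hi => by simpa [K] using hi
  have hclique := isNClique_image_of_split (G := G) (K := K) (r := r) (c := c)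
    fun i hi j hj => split_of_vertDisj (hdisj _ (hK i hi).1 _ (hK j hj).2 Sum.inl_ne_inr)
      (hr i (hK i hi).1) (hc j (hK j hj).2)
  refine ⟨K.image r, ?_, fun u hu v hv huv => hclique.isClique hu hv huv⟩
  have hSAT : SAT.card ≤ K.card + k := by
    simpa using SAT.card_le_card_toLeft_inter_toRight_add
  have hSAT' : (SAT.card : ℝ) ≤ K.card + k := by exact_mod_cast hSAT
  rw [hclique.card_eq]
  linarith

/-- let `0 < ε ≤ 1/2`. If there is a collection `P` of pairwise
vertex-disjoint paths in `U_vertex` such that for at least `(1/2 + ε)·2k` of the `2k`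
terminal pairs `(s,t) ∈ T` the collection contains a shortest (minimum-cost) `s`–`t`
path, then `G` contains a clique of size at least `2εk`. -/
theorem UVert_soundness (N k : ℕ) (hN : 1 ≤ N) (hk : 1 ≤ k)
    (G : SimpleGraph (Fin N)) [DecidableRel G.Adj]
    (ε : ℝ) (hε0 : 0 < ε) (hε : ε ≤ 1 / 2)
    (SAT : Finset (Fin k ⊕ Fin k)) (P : Fin k ⊕ Fin k → List (DVertV k N))
    (hcard : (1 / 2 + ε) * (2 * k) ≤ (SAT.card : ℝ))
    (hshort : ∀ x ∈ SAT,
      IsShortestCostPath (DVertE k N G) (costVert k N) (vSrc x) (vDst x) (P x))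
    (hdisj : ∀ x ∈ SAT, ∀ y ∈ SAT, x ≠ y → VertDisj (P x) (P y)) :
    ∃ Z : Finset (Fin N),
      2 * ε * k ≤ (Z.card : ℝ) ∧ ∀ u ∈ Z, ∀ v ∈ Z, u ≠ v → G.Adj u v :=
  UVert_soundness_general N k hN G ε SAT P hcard hshort hdisj
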